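/- Let A be a set of reals and let 𝔸(A) be the almost disjoint coding poset with conditions (s(0), s(1)), s(0) a finite set of naturals and s(1) a finite subset of A, ordered by s ≤ r iff r(0) ⊆ s(0), r(1) ⊆ s(1), and S(a) ∩ s(0) ⊆ r(0) for every a ∈ r(1). Then for every k ∈ ℕ, the finite product poset 𝔸(A)^k (k-tuples of conditions ordered coordinatewise) satisfies the countable chain condition: every antichain in 𝔸(A)^k is countable. -/
import Mathlib

/-- The set `S(a)` of codes of initial segments of the real `a`,
relative to an injective coding `e` of finite sequences. -/
def Scode (e : List ℕ → ℕ) (a : ℕ → ℕ) : Set ℕ :=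
  {m | ∃ n : ℕ, m = e (List.ofFn fun i : Fin n => a i)}

/-- The ordering of the almost disjoint coding poset `𝔸(A)`:
`s ≤ r` iff `r(0) ⊆ s(0)`, `r(1) ⊆ s(1)` and `S(a) ∩ s(0) ⊆ r(0)` for all `a ∈ r(1)`. -/
def adLe (e : List ℕ → ℕ) (s r : Finset ℕ × Finset (ℕ → ℕ)) : Prop :=
  r.1 ⊆ s.1 ∧ r.2 ⊆ s.2 ∧ ∀ a ∈ r.2, Scode e a ∩ ↑s.1 ⊆ ↑r.1

/-- Every finite product `𝔸(A)^k` of the almost disjoint coding poset,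
ordered coordinatewise, has the countable chain condition. -/
theorem adCoding_product_ccc
    (e : List ℕ → ℕ) (he : Function.Injective e) (A : Set (ℕ → ℕ)) (k : ℕ)
    (T : Set (Fin k → Finset ℕ × Finset (ℕ → ℕ)))
    (hT : ∀ s ∈ T, ∀ i, (↑(s i).2 : Set (ℕ → ℕ)) ⊆ A)
    (hanti : ∀ s ∈ T, ∀ r ∈ T, s ≠ r →
      ¬ ∃ t : Fin k → Finset ℕ × Finset (ℕ → ℕ),
        (∀ i, (↑(t i).2 : Set (ℕ → ℕ)) ⊆ A) ∧
        (∀ i, adLe e (t i) (s i)) ∧ (∀ i, adLe e (t i) (r i))) :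
    T.Countable := by
  classical
  have hinj : Set.InjOn (fun s : Fin k → Finset ℕ × Finset (ℕ → ℕ) =>
      fun i => (s i).1) T := by
    intro s hs r hr hsr
    by_contra hne
    apply hanti s hs r hr hne
    have h1 : ∀ i, (s i).1 = (r i).1 := fun i => congrFun hsr i
    refine ⟨fun i => ((s i).1, (s i).2 ∪ (r i).2), ?_, ?_, ?_⟩
    · intro i
      push_cast
      exact Set.union_subset (hT s hs i) (hT r hr i)
    · intro i
      exact ⟨subset_rfl, Finset.subset_union_left, fun a _ => Set.inter_subset_right⟩
    · intro i
      refine ⟨(h1 i).symm ▸ subset_rfl, Finset.subset_union_right, fun a _ => ?_⟩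
      rw [← h1 i]
      exact Set.inter_subset_right
  exact Set.countable_of_injective_of_countable_image hinj (Set.to_countable _)
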